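/- arXiv:2009.05772 — 3 statements merged into one kernel-verified Lean document; each statement's English description precedes it below -/
import Mathlib

section
/- If G is a finite non-cyclic group acting on a relation module R/[R,R] arising from a free presentation 1 → R → F → G → 1 with F free of finite rank at least 2, then the action of G on R/[R,R] is faithful. More precisely: for each nontrivial x in G, letting C be the cyclic subgroup generated by x, the restriction of R/[R,R] to C contains a free ZC-summand, so x acts nontrivially. -/
/-!
Reduce mod 2 the Magnus representation `ψ : F → (𝔽₂G)^d ⋊ G`, `f ↦ (∂f/∂x₁, …, ∂f/∂x_d; φ f)`.
On `R = ker φ` it is additive, so `[R, R] ⊆ ker ψ` and `ψ(R)` is an elementary abelian 2-group,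
isomorphic to the Fox Jacobian image `P ⊆ (𝔽₂G)^d` of `R`. Modulo `P`, each basis vector `g • eᵢ`
is a difference of Fox Jacobians of elements of `F`, and the class of the Fox Jacobian of `f`
depends only on `φ f`; hence `(𝔽₂G)^d / P` is generated by `|G| - 1` elements and
`|P| ≥ 2^((d-1)|G|+1)`.

If `x` commuted with `R` modulo `[R, R]`, then `ψ(H)` would be abelian for `H = ⟨R, x⟩`. By
Schreier, `H` is generated by `md` elements where `m = [F : H]`, so the 2-torsion of `ψ(H)`, which
contains `ψ(R)`, has at most `2^(md)` elements. As `x ∉ R`, `|G| = [H : R] m ≥ 2m`, so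
`(d-1)|G| + 1 > md`, contradicting the two bounds.
-/

open Function MonoidAlgebra Multiplicative

instance MonoidAlgebra.finite {k G : Type*} [Semiring k] [Finite k] [Finite G] :
    Finite k[G] :=
  .of_equiv _ (coeffEquiv.trans Finsupp.equivFunOnFinite).symm

theorem Nat.card_monoidAlgebra {k G : Type*} [Semiring k] [Finite G] :
    Nat.card k[G] = Nat.card k ^ Nat.card G := by
  rw [Nat.card_congr (coeffEquiv.trans Finsupp.equivFunOnFinite), Nat.card_fun]

instance SemidirectProduct.finite {N G : Type*} [Group N] [Group G] {φ : G →* MulAut N}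
    [Finite N] [Finite G] : Finite (N ⋊[φ] G) :=
  .of_injective (fun u => (u.left, u.right)) fun _ _ h =>
    SemidirectProduct.ext (congrArg Prod.fst h) (congrArg Prod.snd h)

@[to_additive]
theorem CommGroup.card_le_pow_rank {A : Type*} [CommGroup A] [Group.FG A] {n : ℕ} (hn : n ≠ 0)
    (hA : ∀ a : A, a ^ n = 1) : Nat.card A ≤ n ^ Group.rank A :=
  Nat.le_of_dvd (pow_pos (Nat.pos_of_ne_zero hn) _) (card_dvd_exponent_pow_rank' A hA)

theorem CommGroup.card_le_pow_rank_of_pow_eq_one {A : Type*} [CommGroup A] [Finite A] {n : ℕ}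
    (hn : n ≠ 0) {E : Subgroup A} (hE : ∀ a ∈ E, a ^ n = 1) :
    Nat.card E ≤ n ^ Group.rank A := by
  set f : A →* A := powMonoidHom n
  have hker : Nat.card f.ker = Nat.card (A ⧸ f.range) := by
    have h := f.ker.card_mul_index.trans f.range.card_mul_index.symm
    rw [Subgroup.index_ker, mul_comm] at h
    exact Nat.eq_of_mul_eq_mul_left Nat.card_pos h
  have hexp (q : A ⧸ f.range) : q ^ n = 1 :=
    QuotientGroup.induction_on q fun a => (QuotientGroup.eq_one_iff _).mpr ⟨a, rfl⟩
  calc Nat.card E ≤ Nat.card f.ker := Subgroup.card_le_of_le hE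
    _ = Nat.card (A ⧸ f.range) := hker
    _ ≤ n ^ Group.rank (A ⧸ f.range) := CommGroup.card_le_pow_rank hn hexp
    _ ≤ n ^ Group.rank A := Nat.pow_le_pow_right (Nat.pos_of_ne_zero hn)
          (Group.rank_le_of_surjective _ (QuotientGroup.mk'_surjective f.range))

theorem FreeGroup.rank_le_card (α : Type*) [Fintype α] :
    Group.rank (FreeGroup α) ≤ Fintype.card α := by
  classical
  calc Group.rank (FreeGroup α) ≤ (Finset.univ.image FreeGroup.of).card := by
        apply Group.rank_le
        rw [Finset.coe_image, Finset.coe_univ, Set.image_univ, FreeGroup.closure_range_of]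
    _ ≤ Fintype.card α := Finset.card_image_le

theorem Subgroup.isMulCommutative_sup_zpowers {K : Type*} [Group K] {E : Subgroup K}
    [IsMulCommutative E] {y : K} (hy : y ∈ centralizer E) :
    IsMulCommutative ↥(E ⊔ zpowers y) := by
  rw [zpowers_eq_closure, ← E.closure_eq, ← closure_union]
  refine isMulCommutative_closure ?_
  rintro a (ha | rfl) b (hb | rfl)
  · exact setLike_mul_comm ha hb
  · exact (mem_centralizer_iff.mp hy a ha)
  · exact (mem_centralizer_iff.mp hy b hb).symm
  · rfl

open scoped IsMulCommutative in
theorem Subgroup.card_map_le_pow_index_mul_rank {F K : Type*} [Group F] [Group.FG F] [Group K]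
    [Finite K] (ψ : F →* K) {R H : Subgroup F} [H.FiniteIndex] [IsMulCommutative (H.map ψ)]
    (hRH : R ≤ H) {n : ℕ} (hn : n ≠ 0) (hR : ∀ r ∈ R, ψ r ^ n = 1) :
    Nat.card (R.map ψ) ≤ n ^ (H.index * Group.rank F) := by
  have hrank : Group.rank (H.map ψ) ≤ H.index * Group.rank F :=
    (Group.rank_le_of_surjective _ (ψ.subgroupMap_surjective H)).trans H.rank_le_index_mul_rank
  rw [← Nat.card_congr (subgroupOfEquivOfLe (map_mono hRH)).toEquiv]
  refine (CommGroup.card_le_pow_rank_of_pow_eq_one hn ?_).trans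
    (Nat.pow_le_pow_right (Nat.pos_of_ne_zero hn) hrank)
  rintro a ⟨r, hr, hra⟩
  exact Subtype.ext (by simpa [hra] using hR r hr)

section Magnus

variable (k : Type*) {G ι : Type*} [Ring k] [Group G]

noncomputable def leftMulAut : G →* MulAut (Multiplicative (ι → k[G])) where
  toFun g := AddEquiv.toMultiplicative
    (DistribMulAction.toAddAut (k[G])ˣ (ι → k[G]) ((MonoidAlgebra.of k G).toHomUnits g))
  map_one' := by ext; simp
  map_mul' g h := by ext; simp [mul_smul]

@[simp]
theorem leftMulAut_apply (g : G) (v : Multiplicative (ι → k[G])) :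
    leftMulAut k g v = ofAdd (MonoidAlgebra.of k G g • v.toAdd) :=
  rfl

variable [DecidableEq ι] (φ : FreeGroup ι →* G)

noncomputable def magnusHom : FreeGroup ι →* Multiplicative (ι → k[G]) ⋊[leftMulAut k] G :=
  FreeGroup.lift fun i => ⟨ofAdd (Pi.single i 1), φ (.of i)⟩

@[simp]
theorem magnusHom_right (f : FreeGroup ι) : (magnusHom k φ f).right = φ f := by
  have : SemidirectProduct.rightHom.comp (magnusHom k φ) = φ :=
    FreeGroup.ext_hom _ _ fun i => by simp [magnusHom]
  exact DFunLike.congr_fun this f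

/-- `foxDeriv k φ f i` is the image in `k[G]` of the Fox derivative `∂f/∂xᵢ`. -/
noncomputable def foxDeriv (f : FreeGroup ι) : ι → k[G] :=
  (magnusHom k φ f).left.toAdd

theorem foxDeriv_mul (f f' : FreeGroup ι) :
    foxDeriv k φ (f * f') =
      foxDeriv k φ f + MonoidAlgebra.of k G (φ f) • foxDeriv k φ f' := by
  simp [foxDeriv]

@[simp]
theorem foxDeriv_one : foxDeriv k φ 1 = 0 := by
  simp [foxDeriv]

@[simp]
theorem foxDeriv_of (i : ι) : foxDeriv k φ (.of i) = Pi.single i 1 := by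
  simp [foxDeriv, magnusHom]

theorem foxDeriv_mul_of_mem_ker {r : FreeGroup ι} (hr : r ∈ φ.ker) (f : FreeGroup ι) :
    foxDeriv k φ (r * f) = foxDeriv k φ r + foxDeriv k φ f := by
  rw [foxDeriv_mul, φ.mem_ker.mp hr, map_one, one_smul]

theorem magnusHom_eq_inl {r : FreeGroup ι} (hr : r ∈ φ.ker) :
    magnusHom k φ r = SemidirectProduct.inl (ofAdd (foxDeriv k φ r)) :=
  SemidirectProduct.ext rfl (by simpa using hr)

/-- The Fox Jacobian image of `R = φ.ker`, an additive quotient of the relation module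
`R/[R, R]`. -/
def relationModule : AddSubgroup (ι → k[G]) where
  carrier := foxDeriv k φ '' φ.ker
  zero_mem' := ⟨1, one_mem _, foxDeriv_one k φ⟩
  add_mem' := by
    rintro _ _ ⟨r, hr, rfl⟩ ⟨s, hs, rfl⟩
    exact ⟨r * s, mul_mem hr hs, foxDeriv_mul_of_mem_ker k φ hr s⟩
  neg_mem' := by
    rintro _ ⟨r, hr, rfl⟩
    refine ⟨r⁻¹, inv_mem hr, eq_neg_of_add_eq_zero_left ?_⟩
    rw [← foxDeriv_mul_of_mem_ker k φ (inv_mem hr), inv_mul_cancel, foxDeriv_one]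

theorem mem_relationModule {v : ι → k[G]} :
    v ∈ relationModule k φ ↔ ∃ r ∈ φ.ker, foxDeriv k φ r = v :=
  Iff.rfl

instance isMulCommutative_map_ker_magnusHom : IsMulCommutative (φ.ker.map (magnusHom k φ)) :=
  .of_setLike_mul_comm <| by
    rintro _ ⟨r, hr, rfl⟩ _ ⟨s, hs, rfl⟩
    rw [magnusHom_eq_inl k φ hr, magnusHom_eq_inl k φ hs]
    exact (Commute.all _ _).map SemidirectProduct.inl

theorem commutator_ker_le_ker_magnusHom : ⁅φ.ker, φ.ker⁆ ≤ (magnusHom k φ).ker := by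
  rw [← Subgroup.map_eq_bot_iff, Subgroup.map_commutator,
    Subgroup.commutator_eq_bot_iff_le_centralizer, Subgroup.le_centralizer_iff_isMulCommutative]
  infer_instance

theorem card_relationModule :
    Nat.card (relationModule k φ) = Nat.card (φ.ker.map (magnusHom k φ)) := by
  have h : (φ.ker.map (magnusHom k φ) : Set (Multiplicative (ι → k[G]) ⋊[leftMulAut k] G)) =
      (SemidirectProduct.inl ∘ ofAdd) '' (relationModule k φ : Set (ι → k[G])) := by
    ext
    constructor
    · rintro ⟨r, hr, rfl⟩
      exact ⟨_, ⟨r, hr, rfl⟩, (magnusHom_eq_inl k φ hr).symm⟩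
    · rintro ⟨_, ⟨r, hr, rfl⟩, rfl⟩
      exact ⟨r, hr, magnusHom_eq_inl k φ hr⟩
  calc Nat.card (relationModule k φ)
      = Nat.card ((SemidirectProduct.inl ∘ ofAdd) '' (relationModule k φ : Set (ι → k[G]))) :=
        (Nat.card_image_of_injective (SemidirectProduct.inl_injective.comp ofAdd.injective) _).symm
    _ = Nat.card (φ.ker.map (magnusHom k φ)) := by rw [← h]; rfl

variable {φ} (hφ : Surjective φ)

noncomputable def foxClass (g : G) : (ι → k[G]) ⧸ relationModule k φ :=
  (foxDeriv k φ (surjInv hφ g) : ι → k[G])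

theorem mk_foxDeriv (f : FreeGroup ι) :
    ((foxDeriv k φ f : ι → k[G]) : (ι → k[G]) ⧸ relationModule k φ) =
      foxClass k hφ (φ f) := by
  set f₀ := surjInv hφ (φ f)
  have hr : f * f₀⁻¹ ∈ φ.ker := by simp [f₀, surjInv_eq hφ]
  have h := foxDeriv_mul_of_mem_ker k φ hr f₀
  rw [inv_mul_cancel_right] at h
  rw [foxClass, h, QuotientAddGroup.mk_add,
    (QuotientAddGroup.eq_zero_iff _).mpr ((mem_relationModule k φ).mpr ⟨_, hr, rfl⟩), zero_add]

theorem foxClass_one : foxClass k hφ (1 : G) = 0 := by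
  rw [← map_one φ, ← mk_foxDeriv, foxDeriv_one, QuotientAddGroup.mk_zero]

theorem mk_single_single (i : ι) (g : G) :
    ((Pi.single i (single g 1) : ι → k[G]) : (ι → k[G]) ⧸ relationModule k φ) =
      foxClass k hφ (g * φ (.of i)) - foxClass k hφ g := by
  have h := foxDeriv_mul k φ (surjInv hφ g) (.of i)
  rw [surjInv_eq hφ, foxDeriv_of, ← Pi.single_smul, smul_eq_mul, mul_one,
    MonoidAlgebra.of_apply] at h
  have h' := mk_foxDeriv k hφ (surjInv hφ g * .of i)
  rw [h, map_mul, surjInv_eq hφ, QuotientAddGroup.mk_add] at h'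
  rw [← h']
  exact (add_sub_cancel_left _ _).symm

end Magnus

section ZMod

variable {G ι : Type*} [Group G] [DecidableEq ι] {n : ℕ} {φ : FreeGroup ι →* G}

theorem magnusHom_pow_eq_one {r : FreeGroup ι} (hr : r ∈ φ.ker) :
    magnusHom (ZMod n) φ r ^ n = 1 := by
  rw [magnusHom_eq_inl _ φ hr, ← map_pow, ← ofAdd_nsmul, ZModModule.char_nsmul_eq_zero,
    ofAdd_zero, map_one]

variable [Fintype ι]

theorem closure_foxClass_eq_top (hφ : Surjective φ) :
    AddSubgroup.closure
      (foxClass (ZMod n) hφ '' {1}ᶜ : Set ((ι → (ZMod n)[G]) ⧸ relationModule (ZMod n) φ)) =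
      ⊤ := by
  set S := AddSubgroup.closure (foxClass (ZMod n) hφ '' {1}ᶜ : Set ((ι → (ZMod n)[G]) ⧸ _))
  have hclass (g : G) : foxClass (ZMod n) hφ g ∈ S := by
    rcases eq_or_ne g 1 with rfl | hg
    · rw [foxClass_one]
      exact S.zero_mem
    · exact AddSubgroup.subset_closure ⟨g, hg, rfl⟩
  set T := S.comap (QuotientAddGroup.mk' (relationModule (ZMod n) φ))
  have hsingle (i : ι) (a : (ZMod n)[G]) : Pi.single i a ∈ T := by
    induction a using MonoidAlgebra.induction_linear with
    | zero => simp
    | add a b ha hb => simpa [Pi.single_add] using T.add_mem ha hb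
    | single g c =>
      obtain ⟨m, rfl⟩ := ZMod.intCast_surjective c
      have : (Pi.single i (single g (m : ZMod n)) : ι → (ZMod n)[G]) =
          m • Pi.single i (single g 1) := by
        rw [← Pi.single_smul, MonoidAlgebra.smul_single, zsmul_one]
      rw [this]
      refine T.zsmul_mem ?_ m
      show ((Pi.single i (single g (1 : ZMod n)) : ι → (ZMod n)[G]) : _ ⧸ _) ∈ S
      rw [mk_single_single _ hφ]
      exact S.sub_mem (hclass _) (hclass _)
  refine eq_top_iff.mpr fun q _ => QuotientAddGroup.induction_on q fun v => ?_
  rw [← Finset.univ_sum_single v]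
  exact T.sum_mem fun i _ => hsingle i (v i)

theorem card_quotient_relationModule_le [NeZero n] [Finite G] (hφ : Surjective φ) :
    Nat.card ((ι → (ZMod n)[G]) ⧸ relationModule (ZMod n) φ) ≤ n ^ (Nat.card G - 1) := by
  classical
  have := Fintype.ofFinite G
  have hexp (q : (ι → (ZMod n)[G]) ⧸ relationModule (ZMod n) φ) : n • q = 0 :=
    QuotientAddGroup.induction_on q fun v => by
      rw [← QuotientAddGroup.mk_nsmul, ZModModule.char_nsmul_eq_zero, QuotientAddGroup.mk_zero]
  have hrank :
      AddGroup.rank ((ι → (ZMod n)[G]) ⧸ relationModule (ZMod n) φ) ≤ Nat.card G - 1 :=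
    calc _ ≤ ((Finset.univ.erase 1).image (foxClass (ZMod n) hφ)).card := AddGroup.rank_le
          (by simpa [← Set.compl_eq_univ_sdiff] using closure_foxClass_eq_top hφ)
      _ ≤ (Finset.univ.erase (1 : G)).card := Finset.card_image_le
      _ = Nat.card G - 1 := by
          rw [Finset.card_erase_of_mem (Finset.mem_univ _), Finset.card_univ,
            Nat.card_eq_fintype_card]
  exact (AddCommGroup.card_le_nsmul_rank (NeZero.ne n) hexp).trans
    (Nat.pow_le_pow_right (NeZero.pos n) hrank)

theorem pow_le_card_relationModule [NeZero n] [Finite G] (hφ : Surjective φ) :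
    n ^ (Fintype.card ι * Nat.card G) ≤
      n ^ (Nat.card G - 1) * Nat.card (relationModule (ZMod n) φ) :=
  calc n ^ (Fintype.card ι * Nat.card G) = Nat.card (ι → (ZMod n)[G]) := by
        rw [Nat.card_fun, Nat.card_monoidAlgebra, Nat.card_zmod,
          Nat.card_eq_fintype_card (α := ι), ← pow_mul, mul_comm]
    _ = _ := AddSubgroup.card_eq_card_quotient_mul_card_addSubgroup _
    _ ≤ _ := Nat.mul_le_mul_right _ (card_quotient_relationModule_le hφ)

theorem card_relationModule_le_of_commutator_mem [NeZero n] [Finite G] {x : FreeGroup ι}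
    (hx : ∀ r ∈ φ.ker, x * r * x⁻¹ * r⁻¹ ∈ ⁅φ.ker, φ.ker⁆) :
    Nat.card (relationModule (ZMod n) φ) ≤
      n ^ ((φ.ker ⊔ Subgroup.zpowers x).index * Fintype.card ι) := by
  set ψ := magnusHom (ZMod n) φ
  have hcentral : ψ x ∈ Subgroup.centralizer (φ.ker.map ψ) := by
    rintro _ ⟨r, hr, rfl⟩
    have h := commutator_ker_le_ker_magnusHom (ZMod n) φ (hx r hr)
    rw [MonoidHom.mem_ker, ← commutatorElement_def, map_commutatorElement,
      commutatorElement_eq_one_iff_commute] at h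
    exact h.symm.eq
  have : IsMulCommutative ((φ.ker ⊔ Subgroup.zpowers x).map ψ) := by
    rw [Subgroup.map_sup, MonoidHom.map_zpowers]
    exact Subgroup.isMulCommutative_sup_zpowers hcentral
  have : (φ.ker ⊔ Subgroup.zpowers x).FiniteIndex := Subgroup.finiteIndex_of_le le_sup_left
  rw [card_relationModule]
  refine (Subgroup.card_map_le_pow_index_mul_rank ψ
    (le_sup_left : φ.ker ≤ φ.ker ⊔ Subgroup.zpowers x) (NeZero.ne n)
    fun r hr => magnusHom_pow_eq_one hr).trans (Nat.pow_le_pow_right (NeZero.pos n) ?_)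
  exact Nat.mul_le_mul_left _ (FreeGroup.rank_le_card ι)

end ZMod

theorem relation_module_action_faithful_general
    {G : Type*} [Group G] [Finite G]
    {d : ℕ} (hd : 2 ≤ d)
    (φ : FreeGroup (Fin d) →* G) (hφ : Function.Surjective φ)
    (x : FreeGroup (Fin d)) (hx : φ x ≠ 1) :
    ∃ r ∈ φ.ker,
      x * r * x⁻¹ * r⁻¹ ∉ (⁅φ.ker, φ.ker⁆ : Subgroup (FreeGroup (Fin d))) := by
  by_contra! hcomm
  have hupper := card_relationModule_le_of_commutator_mem (n := 2) hcomm
  have hlower := pow_le_card_relationModule (n := 2) hφ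
  set H := φ.ker ⊔ Subgroup.zpowers x
  rw [Fintype.card_fin] at hupper hlower
  have hindex : φ.ker.relIndex H * H.index = Nat.card G := by
    rw [Subgroup.relIndex_mul_index le_sup_left, Subgroup.index_ker,
      φ.range_eq_top_of_surjective hφ, Subgroup.card_top]
  have hpos : 0 < φ.ker.relIndex H * H.index := hindex ▸ Nat.card_pos
  have hrel : 2 ≤ φ.ker.relIndex H := by
    have h1 : φ.ker.relIndex H ≠ 1 := fun h =>
      hx (Subgroup.relIndex_eq_one.mp h (Subgroup.mem_sup_right (Subgroup.mem_zpowers x)))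
    have h0 : φ.ker.relIndex H ≠ 0 := fun h => by simp [h] at hpos
    omega
  have hexp : d * Nat.card G ≤ Nat.card G - 1 + H.index * d := by
    rw [← Nat.pow_le_pow_iff_right one_lt_two, pow_add]
    exact hlower.trans (Nat.mul_le_mul_left _ hupper)
  rw [← hindex] at hexp
  zify [hpos] at hexp
  have hda : d + φ.ker.relIndex H ≤ d * φ.ker.relIndex H := by nlinarith
  nlinarith [Nat.mul_le_mul_right H.index hda]

/-- If `G` is a finite non-cyclic group and `1 → R → F → G → 1` is a free
presentation with `F` free of finite rank `d ≥ 2`, then `G` acts faithfully on the relation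
module `R/[R,R]`: every element of `F` mapping to a nontrivial element of `G` moves some
element of `R` modulo `[R,R]`. -/
theorem relation_module_action_faithful
    {G : Type*} [Group G] [Finite G] (hG : ¬ IsCyclic G)
    {d : ℕ} (hd : 2 ≤ d)
    (φ : FreeGroup (Fin d) →* G) (hφ : Function.Surjective φ)
    (x : FreeGroup (Fin d)) (hx : φ x ≠ 1) :
    ∃ r ∈ φ.ker,
      x * r * x⁻¹ * r⁻¹ ∉ (⁅φ.ker, φ.ker⁆ : Subgroup (FreeGroup (Fin d))) :=
  relation_module_action_faithful_general hd φ hφ x hx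
end

section
/- Let 1 → R → F → G → 1 be a free presentation of a finite group G with F free of finite rank. Then the group F/[R,R] is torsion-free. -/
/-!
Subgroups of free groups are free (Nielsen–Schreier) and free groups have torsion-free
abelianization, so for any subgroup `H` of a free group, `w ∈ H` and `wⁿ ∈ [H, H]` force
`w ∈ [H, H]`. Given `wⁿ ∈ [R, R]`, apply this first to `H = φ⁻¹⟨φ w⟩`, whose commutator
subgroup lies in `R` because `φ(H)` is cyclic, to get `w ∈ R`, and then to `H = R`.
-/

/-- A monoid is torsion-free if all its non-identity elements have infinite order
(the definition `Monoid.IsTorsionFree` of the older Mathlib, since removed). -/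
def Monoid.IsTorsionFree (G : Type*) [Monoid G] : Prop :=
  ∀ g : G, g ≠ 1 → ¬IsOfFinOrder g

instance Abelianization.isMulTorsionFree_of_isFreeGroup (K : Type*) [Group K] [IsFreeGroup K] :
    IsMulTorsionFree (Abelianization K) :=
  let e : Abelianization K ≃* Multiplicative (IsFreeGroup.Generators K →₀ ℤ) :=
    (IsFreeGroup.toFreeGroup K).abelianizationCongr.trans
      (AddEquiv.toMultiplicative (G := FreeAbelianGroup _) (FreeAbelianGroup.equivFinsupp _))
  e.injective.isMulTorsionFree e.toMonoidHom

theorem IsFreeGroup.mem_commutator_of_pow_mem {K : Type*} [Group K] [IsFreeGroup K] {w : K}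
    {n : ℕ} (hn : n ≠ 0) (h : w ^ n ∈ commutator K) : w ∈ commutator K := by
  rw [← Abelianization.ker_of, MonoidHom.mem_ker] at h ⊢
  exact IsMulTorsionFree.pow_left_injective hn (by simpa using h)

namespace Subgroup

theorem coe_mem_commutator_self_iff {F : Type*} [Group F] {H : Subgroup F} {w : H} :
    (w : F) ∈ ⁅H, H⁆ ↔ w ∈ _root_.commutator H := by
  rw [← H.map_subtype_commutator]
  exact mem_map_iff_mem H.subtype_injective

theorem mem_commutator_self_of_pow_mem {F : Type*} [Group F] [IsFreeGroup F] {H : Subgroup F}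
    {w : F} (hw : w ∈ H) {n : ℕ} (hn : n ≠ 0) (h : w ^ n ∈ ⁅H, H⁆) : w ∈ ⁅H, H⁆ := by
  lift w to H using hw
  rw [← coe_pow, coe_mem_commutator_self_iff] at h
  exact coe_mem_commutator_self_iff.mpr (IsFreeGroup.mem_commutator_of_pow_mem hn h)

theorem commutator_comap_le_ker {F G : Type*} [Group F] [Group G] (φ : F →* G)
    (K : Subgroup G) [IsMulCommutative K] : ⁅K.comap φ, K.comap φ⁆ ≤ φ.ker := by
  rw [← MonoidHom.comap_bot, ← map_le_iff_le_comap, map_commutator]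
  exact (commutator_mono (map_comap_le _ _) (map_comap_le _ _)).trans
    (commutator_self_eq_bot_iff.mpr ‹_›).le

end Subgroup

theorem MonoidHom.mem_commutator_ker_of_pow_mem {F G : Type*} [Group F] [IsFreeGroup F] [Group G]
    (φ : F →* G) {w : F} {n : ℕ} (hn : n ≠ 0) (h : w ^ n ∈ ⁅φ.ker, φ.ker⁆) :
    w ∈ ⁅φ.ker, φ.ker⁆ := by
  have hker : φ.ker ≤ (Subgroup.zpowers (φ w)).comap φ := φ.ker_le_comap _
  have hw : w ∈ φ.ker := Subgroup.commutator_comap_le_ker φ _ <|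
    Subgroup.mem_commutator_self_of_pow_mem (Subgroup.mem_zpowers _) hn
      (Subgroup.commutator_mono hker hker h)
  exact Subgroup.mem_commutator_self_of_pow_mem hw hn h

theorem F_mod_commutator_torsionFree_general
    {G : Type*} [Group G]
    {d : ℕ} (φ : FreeGroup (Fin d) →* G) :
    Monoid.IsTorsionFree
      (FreeGroup (Fin d) ⧸ (⁅φ.ker, φ.ker⁆ : Subgroup (FreeGroup (Fin d)))) := by
  intro x hx hfin
  obtain ⟨n, hn, hxn⟩ := hfin.exists_pow_eq_one
  obtain ⟨w, rfl⟩ := QuotientGroup.mk_surjective x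
  rw [← QuotientGroup.mk_pow, QuotientGroup.eq_one_iff] at hxn
  exact hx ((QuotientGroup.eq_one_iff w).mpr (φ.mem_commutator_ker_of_pow_mem hn.ne' hxn))

/-- If `1 → R → F → G → 1` is a free presentation of a finite group `G` with
`F` free of finite rank, then `F/[R,R]` is torsion-free. -/
theorem F_mod_commutator_torsionFree
    {G : Type*} [Group G] [Finite G]
    {d : ℕ} (φ : FreeGroup (Fin d) →* G) (hφ : Function.Surjective φ) :
    Monoid.IsTorsionFree
      (FreeGroup (Fin d) ⧸ (⁅φ.ker, φ.ker⁆ : Subgroup (FreeGroup (Fin d)))) :=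
  F_mod_commutator_torsionFree_general φ
end

section
/- Let G be a finite group and M a ZG-module such that the extension class α ∈ H²(G, M) of an extension 1 → M → E → G → 1 has order |G|. Then for every subgroup H ≤ G, the restriction of α to H²(H, M) has order |H|; in particular, the group E is torsion-free. -/
section TwoCohomology

variable (G : Type*) [Group G] (M : Type*) [AddCommGroup M] [DistribMulAction G M]

/-- Inhomogeneous 2-cocycles of `G` with coefficients in the `G`-module `M`. -/
def twoCocycles : AddSubgroup (G → G → M) where
  carrier := {f | ∀ g h j : G, g • f h j + f g (h * j) = f (g * h) j + f g h}
  zero_mem' := by intro g h j; simp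
  add_mem' := by
    intro a b ha hb g h j
    simp only [Pi.add_apply, smul_add]
    rw [add_add_add_comm, ha g h j, hb g h j, add_add_add_comm]
  neg_mem' := by
    intro a ha g h j
    simp only [Pi.neg_apply, smul_neg, ← neg_add, ha g h j]

/-- The 2-coboundary map. -/
def dOne : (G → M) →+ (G → G → M) where
  toFun c := fun g h => g • c h - c (g * h) + c g
  map_zero' := by funext g h; simp
  map_add' := by
    intro a b; funext g h
    simp only [Pi.add_apply, smul_add]
    abel

/-- 2-coboundaries. -/
def twoCoboundaries : AddSubgroup (G → G → M) := (dOne G M).range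

/-- The second cohomology group `H²(G, M)` (inhomogeneous cocycles mod coboundaries). -/
abbrev H2 := ↥(twoCocycles G M) ⧸ (twoCoboundaries G M).addSubgroupOf (twoCocycles G M)

/-- The class of a 2-cocycle in `H²(G, M)`. -/
def H2mk : ↥(twoCocycles G M) → H2 G M := QuotientAddGroup.mk

variable {G M}

/-- The cocycle-level map underlying `H2map`. -/
def cocyclesMap {Q N : Type*} [Group Q] [AddCommGroup N] [DistribMulAction Q N]
    (f : G →* Q) (c : N →+ M) (hc : ∀ (g : G) (n : N), c (f g • n) = g • c n) :
    ↥(twoCocycles Q N) →+ ↥(twoCocycles G M) where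
  toFun u := ⟨fun g h => c (u.1 (f g) (f h)), by
    intro g h j
    have h2 := u.2 (f g) (f h) (f j)
    simp only [← hc, ← c.map_add, map_mul]
    rw [h2]⟩
  map_zero' := by ext g h; simp
  map_add' := by intro u v; ext g h; simp

/-- Functoriality of `H²` along a group homomorphism `f : G →* Q` and a compatible map of
coefficients `c : N →+ M` (restriction, inflation, and coefficient maps are instances). -/
def H2map {Q N : Type*} [Group Q] [AddCommGroup N] [DistribMulAction Q N]
    (f : G →* Q) (c : N →+ M) (hc : ∀ (g : G) (n : N), c (f g • n) = g • c n) :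
    H2 Q N →+ H2 G M :=
  QuotientAddGroup.map _ _ (cocyclesMap f c hc) (by
    intro u hu
    rw [AddSubgroup.mem_comap]
    rw [AddSubgroup.mem_addSubgroupOf] at hu ⊢
    obtain ⟨c', hc'⟩ := hu
    refine ⟨fun g => c (c' (f g)), ?_⟩
    funext g h
    have h1 : u.1 (f g) (f h) = f g • c' (f h) - c' (f g * f h) + c' (f g) := by
      rw [← hc']; rfl
    show g • c (c' (f h)) - c (c' (f (g * h))) + c (c' (f g)) =
      c (u.1 (f g) (f h))
    rw [h1, map_add, map_sub, hc, map_mul])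

end TwoCohomology

/-- Restriction map `H²(G, M) → H²(H, M)` for a subgroup `H ≤ G`. -/
def H2res {G : Type*} [Group G] {M : Type*} [AddCommGroup M] [DistribMulAction G M]
    (H : Subgroup G) : H2 G M →+ H2 H M :=
  H2map H.subtype (AddMonoidHom.id M) (fun _ _ => rfl)


section TransferLemmas

variable {G : Type*} [Group G] {M : Type*} [AddCommGroup M] [DistribMulAction G M]

/-- Any class in `H²(Q, N)` for a finite group `Q` is killed by `|Q|`. -/
private lemma card_nsmul_H2_eq_zero {Q : Type*} [Group Q] [Finite Q] {N : Type*}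
    [AddCommGroup N] [DistribMulAction Q N] (x : H2 Q N) : Nat.card Q • x = 0 := by
  have : Fintype Q := Fintype.ofFinite Q
  refine QuotientAddGroup.induction_on x ?_
  intro u
  have hmap : (QuotientAddGroup.mk (Nat.card Q • u) : H2 Q N)
      = Nat.card Q • QuotientAddGroup.mk u :=
    map_nsmul (QuotientAddGroup.mk' _) (Nat.card Q) u
  rw [← hmap, QuotientAddGroup.eq_zero_iff, AddSubgroup.mem_addSubgroupOf]
  rw [twoCoboundaries, AddMonoidHom.mem_range]
  refine ⟨fun g => ∑ j : Q, u.1 g j, ?_⟩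
  funext g h
  have e1 : ∑ j : Q, (g • u.1 h j + u.1 g (h * j)) = ∑ j : Q, (u.1 (g * h) j + u.1 g h) :=
    Finset.sum_congr rfl fun j _ => by rw [u.2 g h j]
  rw [Finset.sum_add_distrib, Finset.sum_add_distrib, ← Finset.smul_sum,
    Finset.sum_const, Finset.card_univ] at e1
  have e2 : ∑ j : Q, u.1 g (h * j) = ∑ j : Q, u.1 g j :=
    Fintype.sum_bijective (fun j => h * j) (Group.mulLeft_bijective h) _ _ (fun j => rfl)
  rw [e2] at e1
  have e3 : Fintype.card Q • u.1 g h
      = g • (∑ j : Q, u.1 h j) + (∑ j : Q, u.1 g j) - (∑ j : Q, u.1 (g * h) j) :=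
    eq_sub_of_add_eq' e1.symm
  show g • (∑ j : Q, u.1 h j) - (∑ j : Q, u.1 (g * h) j) + (∑ j : Q, u.1 g j)
      = (↑(Nat.card Q • u) : Q → Q → N) g h
  have hco : (↑(Nat.card Q • u) : Q → Q → N) g h = Nat.card Q • u.1 g h := rfl
  rw [hco, Nat.card_eq_fintype_card, e3]
  abel

/-- The `H`-part of `g * q.out` relative to the representative of `g • q`. -/
private noncomputable def kfun (H : Subgroup G) (g : G) (q : G ⧸ H) : H :=
  ⟨(g • q).out⁻¹ * (g * q.out), by
    rw [← QuotientGroup.eq, QuotientGroup.out_eq',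
      show ((g * q.out : G) : G ⧸ H) = g • q from MulAction.Quotient.coe_smul_out H g q]⟩

private lemma kfun_spec (H : Subgroup G) (g : G) (q : G ⧸ H) :
    ((g • q).out : G) * (kfun H g q : G) = g * q.out := by
  show (g • q).out * ((g • q).out⁻¹ * (g * q.out)) = g * q.out
  rw [mul_inv_cancel_left]

private lemma kfun_mul (H : Subgroup G) (g₁ g₂ : G) (q : G ⧸ H) :
    kfun H (g₁ * g₂) q = kfun H g₁ (g₂ • q) * kfun H g₂ q := by
  apply Subtype.ext
  show ((g₁ * g₂) • q).out⁻¹ * (g₁ * g₂ * q.out)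
      = ((g₁ • (g₂ • q)).out⁻¹ * (g₁ * (g₂ • q).out)) * ((g₂ • q).out⁻¹ * (g₂ * q.out))
  rw [mul_smul g₁ g₂ q]
  group

/-- The key pointwise algebraic identity behind `cores ∘ res = [G:H]`. -/
private lemma transfer_term (f : G → G → M)
    (hf : ∀ x y z : G, x • f y z + f x (y * z) = f (x * y) z + f x y)
    (g₁ g₂ r r' r'' a b : G) (c₁ c₂ c₁₂ : M)
    (e1 : r' * b = g₂ * r) (e2 : r'' * a = g₁ * r')
    (hcab : a • c₂ - c₁₂ + c₁ = f a b) :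
    g₁ • (r' • c₂ - f r' b + f g₂ r) - (r'' • c₁₂ - f r'' (a * b) + f (g₁ * g₂) r)
      + (r'' • c₁ - f r'' a + f g₁ r') = f g₁ g₂ := by
  have A1 : r'' • f a b = f (g₁ * r') b + f r'' a - f r'' (a * b) := by
    have h := eq_sub_of_add_eq (hf r'' a b)
    rwa [e2] at h
  have A2 : f (g₁ * r') b = g₁ • f r' b + f g₁ (g₂ * r) - f g₁ r' := by
    have h := eq_sub_of_add_eq (hf g₁ r' b).symm
    rwa [e1] at h
  have A3 : f g₁ (g₂ * r) = f (g₁ * g₂) r + f g₁ g₂ - g₁ • f g₂ r :=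
    eq_sub_of_add_eq' (hf g₁ g₂ r)
  have hs : g₁ • (r' • c₂) = r'' • (a • c₂) := by
    rw [smul_smul, smul_smul, e2]
  have hc2 : r'' • (a • c₂) - r'' • c₁₂ + r'' • c₁ = r'' • f a b := by
    rw [← smul_sub, ← smul_add, hcab]
  have C1 : r'' • (a • c₂) - r'' • c₁₂ + r'' • c₁
      = f (g₁ * r') b + f r'' a - f r'' (a * b) := hc2.trans A1
  calc g₁ • (r' • c₂ - f r' b + f g₂ r) - (r'' • c₁₂ - f r'' (a * b) + f (g₁ * g₂) r)
        + (r'' • c₁ - f r'' a + f g₁ r')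
      = (r'' • (a • c₂) - r'' • c₁₂ + r'' • c₁)
          + (f r'' (a * b) - f (g₁ * g₂) r - f r'' a + f g₁ r'
            - g₁ • f r' b + g₁ • f g₂ r) := by
        simp only [smul_add, smul_sub]; rw [hs]; abel
    _ = f g₁ g₂ := by rw [C1, A2, A3]; abel

/-- If the restriction of a class to `H` vanishes, the class is killed by the index of `H`. -/
private lemma index_nsmul_eq_zero_of_H2res_eq_zero [Finite G] (H : Subgroup G)
    (α : H2 G M) (hres : H2res H α = 0) : H.index • α = 0 := by
  have : Fintype (G ⧸ H) := Fintype.ofFinite _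
  revert hres
  refine QuotientAddGroup.induction_on α ?_
  intro u hres
  rw [show H2res H (QuotientAddGroup.mk u)
      = (QuotientAddGroup.mk (cocyclesMap H.subtype (AddMonoidHom.id M) (fun _ _ => rfl) u)
        : H2 H M) from rfl, QuotientAddGroup.eq_zero_iff,
    AddSubgroup.mem_addSubgroupOf, twoCoboundaries, AddMonoidHom.mem_range] at hres
  obtain ⟨c, hc⟩ := hres
  have hcc : ∀ x y : H, (x : G) • c y - c (x * y) + c x = u.1 x y := by
    intro x y
    have h1 := congrFun (congrFun hc x) y
    exact h1
  have hmap : (QuotientAddGroup.mk (H.index • u) : H2 G M)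
      = H.index • QuotientAddGroup.mk u :=
    map_nsmul (QuotientAddGroup.mk' _) H.index u
  rw [← hmap, QuotientAddGroup.eq_zero_iff, AddSubgroup.mem_addSubgroupOf,
    twoCoboundaries, AddMonoidHom.mem_range]
  refine ⟨fun g => ∑ q : G ⧸ H,
    ((g • q).out • c (kfun H g q) - u.1 (g • q).out (kfun H g q) + u.1 g q.out), ?_⟩
  funext g₁ g₂
  have hf : ∀ x y z : G, x • u.1 y z + u.1 x (y * z) = u.1 (x * y) z + u.1 x y := u.2
  have term : ∀ q : G ⧸ H,
      g₁ • ((g₂ • q).out • c (kfun H g₂ q) - u.1 (g₂ • q).out (kfun H g₂ q) + u.1 g₂ q.out)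
      - (((g₁ * g₂) • q).out • c (kfun H (g₁ * g₂) q)
          - u.1 ((g₁ * g₂) • q).out (kfun H (g₁ * g₂) q) + u.1 (g₁ * g₂) q.out)
      + ((g₁ • (g₂ • q)).out • c (kfun H g₁ (g₂ • q))
          - u.1 (g₁ • (g₂ • q)).out (kfun H g₁ (g₂ • q)) + u.1 g₁ (g₂ • q).out)
      = u.1 g₁ g₂ := by
    intro q
    have hq12 : (g₁ * g₂) • q = g₁ • (g₂ • q) := mul_smul g₁ g₂ q
    have e2 : (((g₁ * g₂) • q).out : G) * (kfun H g₁ (g₂ • q) : G) = g₁ * (g₂ • q).out := by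
      rw [hq12]; exact kfun_spec H g₁ (g₂ • q)
    have key := transfer_term u.1 hf g₁ g₂ q.out (g₂ • q).out ((g₁ * g₂) • q).out
      (kfun H g₁ (g₂ • q) : G) (kfun H g₂ q : G)
      (c (kfun H g₁ (g₂ • q))) (c (kfun H g₂ q)) (c (kfun H g₁ (g₂ • q) * kfun H g₂ q))
      (kfun_spec H g₂ q) e2 (hcc (kfun H g₁ (g₂ • q)) (kfun H g₂ q))
    rw [kfun_mul H g₁ g₂ q, ← hq12]
    simp only [Subgroup.coe_mul]
    exact key
  show g₁ • (∑ q : G ⧸ H,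
        ((g₂ • q).out • c (kfun H g₂ q) - u.1 (g₂ • q).out (kfun H g₂ q) + u.1 g₂ q.out))
      - (∑ q : G ⧸ H, (((g₁ * g₂) • q).out • c (kfun H (g₁ * g₂) q)
          - u.1 ((g₁ * g₂) • q).out (kfun H (g₁ * g₂) q) + u.1 (g₁ * g₂) q.out))
      + (∑ q : G ⧸ H, ((g₁ • q).out • c (kfun H g₁ q)
          - u.1 (g₁ • q).out (kfun H g₁ q) + u.1 g₁ q.out))
      = (↑(H.index • u) : G → G → M) g₁ g₂
  have hre : (∑ q : G ⧸ H, ((g₁ • q).out • c (kfun H g₁ q)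
        - u.1 (g₁ • q).out (kfun H g₁ q) + u.1 g₁ q.out))
      = ∑ q : G ⧸ H, ((g₁ • (g₂ • q)).out • c (kfun H g₁ (g₂ • q))
        - u.1 (g₁ • (g₂ • q)).out (kfun H g₁ (g₂ • q)) + u.1 g₁ (g₂ • q).out) :=
    (Fintype.sum_bijective (fun q => g₂ • q) (MulAction.bijective g₂) _ _ (fun q => rfl)).symm
  rw [hre, Finset.smul_sum, ← Finset.sum_sub_distrib, ← Finset.sum_add_distrib]
  rw [Finset.sum_congr rfl (fun q _ => term q), Finset.sum_const, Finset.card_univ]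
  have hco : (↑(H.index • u) : G → G → M) g₁ g₂ = H.index • u.1 g₁ g₂ := rfl
  rw [hco, Subgroup.index_eq_card, Nat.card_eq_fintype_card]

end TransferLemmas

/-- If `α ∈ H²(G, M)` has order `|G|` then for every subgroup `H ≤ G` the
restriction of `α` to `H²(H, M)` has order `|H|`.  (In particular, any extension of `G`
by a torsion-free abelian group `M` with class `α` is torsion-free, since the class
restricts nontrivially to every nontrivial cyclic subgroup.) -/
theorem restriction_of_maximal_order_class
    {G : Type*} [Group G] [Finite G] {M : Type*} [AddCommGroup M] [DistribMulAction G M]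
    (α : H2 G M) (hα : addOrderOf α = Nat.card G) (H : Subgroup G) :
    addOrderOf (H2res H α) = Nat.card H := by
  have h1 : addOrderOf (H2res H α) ∣ Nat.card ↥H :=
    addOrderOf_dvd_of_nsmul_eq_zero (card_nsmul_H2_eq_zero _)
  have h2 : Nat.card ↥H ∣ addOrderOf (H2res H α) := by
    have hz : H2res H (addOrderOf (H2res H α) • α) = 0 := by
      rw [map_nsmul]; exact addOrderOf_nsmul_eq_zero _
    have h3 : H.index • (addOrderOf (H2res H α) • α) = 0 :=
      index_nsmul_eq_zero_of_H2res_eq_zero H _ hz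
    rw [smul_smul] at h3
    have h4 : Nat.card G ∣ H.index * addOrderOf (H2res H α) :=
      hα ▸ addOrderOf_dvd_of_nsmul_eq_zero h3
    rw [← Subgroup.card_mul_index H, mul_comm H.index] at h4
    exact (Nat.mul_dvd_mul_iff_right
      (Nat.pos_of_ne_zero Subgroup.index_ne_zero_of_finite)).mp h4
  exact Nat.dvd_antisymm h1 h2
end
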